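/- If ω is a node in a tree G_n on n nodes such that |T_u^ω| ≤ n/2 for every neighbor u of ω in a subset N_l(ω) of its neighbors, then R(ω, G_n) ≥ R(u, G_n) for all u ∈ N_l(ω). -/

import Mathlib

/-!
For adjacent `ω` and `u`, moving the root from `ω` to `u` changes only two subtrees:
`T_u^ω` (of size `t`) becomes the whole tree and `T_ω^u`, which in a tree is the complement of
`T_u^ω`, has size `n - t`, so `R(u) / R(ω) = t / (n - t) ≤ 1` as soon as `2 t ≤ n`.
-/

/-- `subtreeSet G u v` is the subtree `T_u^v` rooted at `u` when the tree is rooted at `v`. -/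
def subtreeSet {V : Type*} (G : SimpleGraph V) (u v : V) : Set V :=
  {w | ∀ p : G.Walk v w, u ∈ p.support}

/-- Rumor centrality `R(s, G_n) = n! · ∏_{u} 1 / |T_u^s|`. -/
noncomputable def rumorCentrality {V : Type*} [Fintype V] (G : SimpleGraph V) (s : V) : ℚ :=
  (Nat.factorial (Fintype.card V) : ℚ) * ∏ u : V, 1 / ((subtreeSet G u s).ncard : ℚ)

open SimpleGraph Finset

section Subtree

variable {V : Type*} {G : SimpleGraph V}

lemma subtreeSet_self (G : SimpleGraph V) (s : V) : subtreeSet G s s = Set.univ :=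
  Set.eq_univ_of_forall fun _ p => p.start_mem_support

lemma ncard_subtreeSet_pos [Finite V] (G : SimpleGraph V) (w s : V) :
    0 < (subtreeSet G w s).ncard :=
  (Set.ncard_pos (Set.toFinite _)).2 ⟨w, fun p => p.end_mem_support⟩

lemma subtreeSet_eq_of_adj {u ω w : V} (h : G.Adj ω u) (hwu : w ≠ u) (hwω : w ≠ ω) :
    subtreeSet G w u = subtreeSet G w ω := by
  ext x
  refine ⟨fun hx p => ?_, fun hx p => ?_⟩
  · simpa [hwu] using hx (.cons h.symm p)
  · simpa [hwω] using hx (.cons h p)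

lemma mem_subtreeSet_iff_of_isPath (hG : G.IsAcyclic) {u v w : V} {p : G.Walk w v}
    (hp : p.IsPath) : w ∈ subtreeSet G u v ↔ u ∈ p.support := by
  classical
  refine ⟨fun hw => by simpa using hw p.reverse, fun hu q => ?_⟩
  have hpq : p = q.bypass.reverse :=
    congrArg Subtype.val <|
      (hG.subsingleton_path w v).elim ⟨p, hp⟩ ⟨_, q.bypass_isPath.reverse⟩
  rw [hpq, Walk.support_reverse, List.mem_reverse] at hu
  exact q.support_bypass_subset_support hu

lemma subtreeSet_eq_compl_of_adj (hG : G.IsTree) {u ω : V} (h : G.Adj ω u) :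
    subtreeSet G ω u = (subtreeSet G u ω)ᶜ := by
  ext w
  obtain ⟨P, hP, -⟩ := hG.existsUnique_path w ω
  obtain ⟨Q, hQ, -⟩ := hG.existsUnique_path w u
  rw [Set.mem_compl_iff, mem_subtreeSet_iff_of_isPath hG.isAcyclic hQ,
    mem_subtreeSet_iff_of_isPath hG.isAcyclic hP]
  exact ⟨hG.isAcyclic.ne_mem_support_of_support_of_adj_of_isPath hQ hP h.symm,
    hG.isAcyclic.mem_support_of_ne_mem_support_of_adj_of_isPath hQ hP h.symm⟩

lemma ncard_subtreeSet_of_adj [Finite V] (hG : G.IsTree) {u ω : V} (h : G.Adj ω u) :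
    (subtreeSet G ω u).ncard = Nat.card V - (subtreeSet G u ω).ncard := by
  rw [subtreeSet_eq_compl_of_adj hG h, Set.ncard_compl]

end Subtree

section RumorCentrality

variable {V : Type*} [Fintype V] {G : SimpleGraph V}

lemma rumorCentrality_eq_div (G : SimpleGraph V) (s : V) :
    rumorCentrality G s =
      (Fintype.card V).factorial / ((∏ w, (subtreeSet G w s).ncard : ℕ) : ℚ) := by
  simp [rumorCentrality, div_eq_mul_inv]

lemma prod_ncard_subtreeSet_mul_of_adj {u ω : V} (h : G.Adj ω u) :
    (∏ w, (subtreeSet G w ω).ncard) * (subtreeSet G ω u).ncard =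
      (∏ w, (subtreeSet G w u).ncard) * (subtreeSet G u ω).ncard := by
  classical
  set S := (univ.erase u).erase ω
  have split (s : V) : ∏ w, (subtreeSet G w s).ncard =
      (subtreeSet G u s).ncard *
        ((subtreeSet G ω s).ncard * ∏ w ∈ S, (subtreeSet G w s).ncard) := by
    rw [← mul_prod_erase _ _ (mem_univ u),
      ← mul_prod_erase _ _ (mem_erase.2 ⟨h.ne, mem_univ ω⟩)]
  have common : ∏ w ∈ S, (subtreeSet G w u).ncard = ∏ w ∈ S, (subtreeSet G w ω).ncard :=
    prod_congr rfl fun w hw => by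
      obtain ⟨hwω, hwu⟩ : w ≠ ω ∧ w ≠ u := by simpa [S] using hw
      rw [subtreeSet_eq_of_adj h hwu hwω]
  rw [split ω, split u, common, subtreeSet_self, subtreeSet_self]
  ring

theorem rumorCentrality_le_of_adj (hG : G.IsTree) {u ω : V} (h : G.Adj ω u)
    (hsize : 2 * (subtreeSet G u ω).ncard ≤ Fintype.card V) :
    rumorCentrality G u ≤ rumorCentrality G ω := by
  have hpos (s : V) : 0 < ∏ w, (subtreeSet G w s).ncard :=
    prod_pos fun w _ => ncard_subtreeSet_pos G w s
  have hsmall : (subtreeSet G u ω).ncard ≤ (subtreeSet G ω u).ncard := by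
    rw [ncard_subtreeSet_of_adj hG h, Nat.card_eq_fintype_card]
    omega
  have hprod : ∏ w, (subtreeSet G w ω).ncard ≤ ∏ w, (subtreeSet G w u).ncard := by
    refine Nat.le_of_mul_le_mul_right ?_ (ncard_subtreeSet_pos G ω u)
    rw [prod_ncard_subtreeSet_mul_of_adj h]
    exact Nat.mul_le_mul_left _ hsmall
  rw [rumorCentrality_eq_div, rumorCentrality_eq_div]
  exact div_le_div_of_nonneg_left (by positivity) (by exact_mod_cast hpos ω)
    (by exact_mod_cast hprod)

end RumorCentrality

/-- If `|T_u^ω| ≤ n/2` for every neighbor `u` of `ω` in a subset `N_l(ω)` of its neighbors,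
then `R(ω, G_n) ≥ R(u, G_n)` for all `u ∈ N_l(ω)`. -/
theorem local_rumor_center_of_small_subtrees {V : Type*} [Fintype V]
    (G : SimpleGraph V) (hG : G.IsTree) (ω : V) (Nl : Finset V)
    (hNl : ∀ u ∈ Nl, G.Adj ω u)
    (hsize : ∀ u ∈ Nl, 2 * (subtreeSet G u ω).ncard ≤ Fintype.card V) :
    ∀ u ∈ Nl, rumorCentrality G u ≤ rumorCentrality G ω :=
  fun u hu => rumorCentrality_le_of_adj hG (hNl u hu) (hsize u hu)
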